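/- arXiv:1311.1536 — 9 statements merged into one kernel-verified Lean document; each statement's English description precedes it below -/
import Mathlib

section
/- Let ψ0, ψ1, ψ2 be unit vectors in ℂ² and p0, p1, p2 ≥ 0 reals with p0 + p1 + p2 = 1, and set Δ := p0|ψ0⟩⟨ψ0| − p1|ψ1⟩⟨ψ1| − p2|ψ2⟩⟨ψ2|. Then the determinant of Δ is real and equals p1·p2·(1 − |⟨ψ1,ψ2⟩|²) − p0·p1·(1 − |⟨ψ0,ψ1⟩|²) − p0·p2·(1 − |⟨ψ0,ψ2⟩|²). -/
open Matrix

/-- The rank-one matrix `|ψ⟩⟨ψ|` with `(i,j)`-entry `ψ i * conj (ψ j)`. -/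
noncomputable def ketbra (ψ : Fin 2 → ℂ) : Matrix (Fin 2) (Fin 2) ℂ :=
  Matrix.vecMulVec ψ (star ψ)

/-- Standard Hermitian inner product `⟨φ, ψ⟩` on `ℂ²`. -/
noncomputable def hinner (φ ψ : Fin 2 → ℂ) : ℂ :=
  ∑ i, (starRingEnd ℂ) (φ i) * ψ i

theorem stmt_0 (ψ0 ψ1 ψ2 : Fin 2 → ℂ) (p0 p1 p2 : ℝ)
    (hu0 : ∑ i, ‖ψ0 i‖ ^ 2 = 1)
    (hu1 : ∑ i, ‖ψ1 i‖ ^ 2 = 1)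
    (hu2 : ∑ i, ‖ψ2 i‖ ^ 2 = 1)
    (hp0 : 0 ≤ p0) (hp1 : 0 ≤ p1) (hp2 : 0 ≤ p2)
    (hsum : p0 + p1 + p2 = 1) :
    ((p0 : ℂ) • ketbra ψ0 - (p1 : ℂ) • ketbra ψ1 - (p2 : ℂ) • ketbra ψ2).det
      = ((p1 * p2 * (1 - ‖hinner ψ1 ψ2‖ ^ 2)
          - p0 * p1 * (1 - ‖hinner ψ0 ψ1‖ ^ 2)
          - p0 * p2 * (1 - ‖hinner ψ0 ψ2‖ ^ 2) : ℝ) : ℂ) := by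

  have key : ∀ ψ : Fin 2 → ℂ, (∑ i, ‖ψ i‖ ^ 2 = 1) →
      ψ 0 * (starRingEnd ℂ) (ψ 0) + ψ 1 * (starRingEnd ℂ) (ψ 1) = 1 := by
    intro ψ h
    have := congrArg (Complex.ofReal) h
    push_cast [Fin.sum_univ_two, Complex.sq_norm, ← Complex.mul_conj] at this
    simpa using this
  have h0 := key ψ0 hu0
  have h1 := key ψ1 hu1
  have h2 := key ψ2 hu2
  simp only [Matrix.det_fin_two, ketbra, hinner, Matrix.vecMulVec_apply,
    Matrix.sub_apply, Matrix.smul_apply, Pi.star_apply, smul_eq_mul, Complex.star_def,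
    Fin.sum_univ_two]
  push_cast [Complex.sq_norm, ← Complex.mul_conj]
  simp only [map_add, _root_.map_mul, Complex.conj_conj, Complex.star_def]
  linear_combination (↑p1*↑p2)*((ψ2 0 * (starRingEnd ℂ) (ψ2 0) + ψ2 1 * (starRingEnd ℂ) (ψ2 1)) * h1 + h2)
    - (↑p0*↑p1)*((ψ1 0 * (starRingEnd ℂ) (ψ1 0) + ψ1 1 * (starRingEnd ℂ) (ψ1 1)) * h0 + h1)
    - (↑p0*↑p2)*((ψ2 0 * (starRingEnd ℂ) (ψ2 0) + ψ2 1 * (starRingEnd ℂ) (ψ2 1)) * h0 + h2)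
end

section
/- Let ψ0, ψ1, ψ2 be unit vectors in ℂ² and p0, p1, p2 ≥ 0 reals with p0 + p1 + p2 = 1, and set Δ := p0|ψ0⟩⟨ψ0| − p1|ψ1⟩⟨ψ1| − p2|ψ2⟩⟨ψ2|. If det Δ ≤ 0 (det Δ is real since Δ is Hermitian), then the minimum of the error probability over all two-outcome POVMs on ℂ² equals 1/2 − (1/2)·√((p0 − p1 − p2)² − 4·det Δ); that is, every two-outcome POVM has error probability at least this value, and some two-outcome POVM attains it. -/
open Matrix
open scoped ComplexOrder

/-- Error probability of the two-outcome POVM `(P0, P1)` for the weighted ensemble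
`{(p0, |ψ0⟩⟨ψ0|); (p1 |ψ1⟩⟨ψ1| + p2 |ψ2⟩⟨ψ2|)}`. -/
noncomputable def errProb (p0 p1 p2 : ℝ) (ψ0 ψ1 ψ2 : Fin 2 → ℂ)
    (P0 P1 : Matrix (Fin 2) (Fin 2) ℂ) : ℝ :=
  ((p0 : ℂ) * (P1 * ketbra ψ0).trace
    + (P0 * ((p1 : ℂ) • ketbra ψ1 + (p2 : ℂ) • ketbra ψ2)).trace).re

/-! ### Auxiliary lemmas -/

lemma psd_diag_re_nonneg {n : Type*} [Fintype n] [DecidableEq n]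
    {M : Matrix n n ℂ} (hM : M.PosSemidef) (i : n) : 0 ≤ (M i i).re := by
  have := hM.re_dotProduct_nonneg (Pi.single i 1)
  simpa [dotProduct, mulVec, Pi.single_apply] using this

lemma psd_trace_re_nonneg {n : Type*} [Fintype n] [DecidableEq n]
    {M : Matrix n n ℂ} (hM : M.PosSemidef) : 0 ≤ M.trace.re := by
  rw [Matrix.trace, Complex.re_sum]
  exact Finset.sum_nonneg fun i _ => psd_diag_re_nonneg hM i

open scoped MatrixOrder in
lemma trace_mul_psd_re_nonneg {n : Type*} [Fintype n] [DecidableEq n]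
    {A B : Matrix n n ℂ} (hA : A.PosSemidef) (hB : B.PosSemidef) :
    0 ≤ (A * B).trace.re := by
  have h1 : A * B = A * CFC.sqrt B * CFC.sqrt B := by rw [mul_assoc, CFC.sqrt_mul_sqrt_self B hB.nonneg]
  have h2 : (A * CFC.sqrt B * CFC.sqrt B).trace = (CFC.sqrt B * A * CFC.sqrt B).trace := by
    rw [Matrix.trace_mul_cycle]
  have h3 : (CFC.sqrt B * A * CFC.sqrt B).PosSemidef := by
    have := hA.conjTranspose_mul_mul_same (CFC.sqrt B)
    rwa [(CFC.sqrt_nonneg B).posSemidef.1.eq] at this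
  rw [h1, h2]
  exact psd_trace_re_nonneg h3

lemma ketbra_trace {ψ : Fin 2 → ℂ} (h : ∑ i, ‖ψ i‖ ^ 2 = 1) :
    (ketbra ψ).trace = 1 := by
  have : (ketbra ψ).trace = ((∑ i, ‖ψ i‖ ^ 2 : ℝ) : ℂ) := by
    rw [Matrix.trace, Complex.ofReal_sum]
    refine Finset.sum_congr rfl fun i _ => ?_
    simp only [Matrix.diag, ketbra, vecMulVec_apply, Pi.star_apply, RCLike.star_def,
      Complex.mul_conj, Complex.sq_norm]
  rw [this, h, Complex.ofReal_one]

section SpectralHelpers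

variable {A : Matrix (Fin 2) (Fin 2) ℂ} (hA : A.IsHermitian)

/-- Coerced eigenvector unitary. -/
noncomputable def Uc (hA : A.IsHermitian) : Matrix (Fin 2) (Fin 2) ℂ := hA.eigenvectorUnitary

/-- Diagonal indicator matrix. -/
noncomputable def Em (i : Fin 2) : Matrix (Fin 2) (Fin 2) ℂ :=
  Matrix.diagonal (fun j => if j = i then 1 else 0)

/-- Spectral projector. -/
noncomputable def Qm (hA : A.IsHermitian) (i : Fin 2) : Matrix (Fin 2) (Fin 2) ℂ :=
  Uc hA * Em i * star (Uc hA)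

lemma hU1 : Uc hA * star (Uc hA) = 1 := Matrix.mem_unitaryGroup_iff.mp hA.eigenvectorUnitary.2
lemma hU2 : star (Uc hA) * Uc hA = 1 := Matrix.mem_unitaryGroup_iff'.mp hA.eigenvectorUnitary.2

lemma Qm_psd (i : Fin 2) : (Qm hA i).PosSemidef := by
  have hE : (Em i).PosSemidef := by
    refine Matrix.posSemidef_diagonal_iff.mpr fun j => ?_
    by_cases h : j = i <;> simp [h]
  have := hE.mul_mul_conjTranspose_same (Uc hA)
  rwa [← Matrix.star_eq_conjTranspose] at this

lemma Em_mul_Em (i j : Fin 2) : Em i * Em j = if i = j then Em i else 0 := by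
  ext k l
  fin_cases i <;> fin_cases j <;> fin_cases k <;> fin_cases l <;>
    simp [Em, Matrix.mul_apply, Matrix.diagonal_apply, Fin.sum_univ_two]

lemma Em_trace (i : Fin 2) : (Em i).trace = 1 := by
  fin_cases i <;> simp [Em, Matrix.trace, Fin.sum_univ_two, Matrix.diagonal_apply]

lemma Qm_trace (i : Fin 2) : (Qm hA i).trace = 1 := by
  rw [Qm, Matrix.trace_mul_cycle, hU2, one_mul, Em_trace]

lemma Qm_mul_Qm (i j : Fin 2) : Qm hA i * Qm hA j = Uc hA * (Em i * Em j) * star (Uc hA) := by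
  rw [Qm, Qm]
  calc Uc hA * Em i * star (Uc hA) * (Uc hA * Em j * star (Uc hA))
      = Uc hA * Em i * (star (Uc hA) * Uc hA) * Em j * star (Uc hA) := by
        noncomm_ring
    _ = Uc hA * (Em i * Em j) * star (Uc hA) := by rw [hU2]; noncomm_ring

lemma Qm_mul_trace (i j : Fin 2) :
    (Qm hA i * Qm hA j).trace = if i = j then 1 else 0 := by
  rw [Qm_mul_Qm, Em_mul_Em]
  by_cases h : i = j
  · simp only [h, if_pos rfl]
    exact Qm_trace hA j
  · simp [h]

lemma Qm_sum : Qm hA 0 + Qm hA 1 = 1 := by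
  have hE : Em 0 + Em 1 = (1 : Matrix (Fin 2) (Fin 2) ℂ) := by
    ext k l
    fin_cases k <;> fin_cases l <;> simp [Em, Matrix.diagonal_apply, Matrix.one_apply]
  rw [Qm, Qm, ← Matrix.add_mul, ← Matrix.mul_add, hE, Matrix.mul_one, hU1]

lemma spectral2 : A = (hA.eigenvalues 0 : ℂ) • Qm hA 0 + (hA.eigenvalues 1 : ℂ) • Qm hA 1 := by
  have hdiag : Matrix.diagonal (RCLike.ofReal ∘ hA.eigenvalues) =
      (hA.eigenvalues 0 : ℂ) • Em 0 + (hA.eigenvalues 1 : ℂ) • Em 1 := by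
    ext k l
    fin_cases k <;> fin_cases l <;>
      simp [Em, Matrix.diagonal_apply]
  conv_lhs => rw [hA.spectral_theorem, Unitary.conjStarAlgAut_apply]
  rw [hdiag, Qm, Qm]
  rw [Matrix.mul_add, Matrix.add_mul]
  rw [Matrix.mul_smul, Matrix.mul_smul, Matrix.smul_mul, Matrix.smul_mul]
  rfl

lemma trace_eq₂ : A.trace = ((hA.eigenvalues 0 + hA.eigenvalues 1 : ℝ) : ℂ) := by
  conv_lhs => rw [hA.spectral_theorem, Unitary.conjStarAlgAut_apply]
  rw [Matrix.trace_mul_cycle]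
  rw [show (star (hA.eigenvectorUnitary : Matrix (Fin 2) (Fin 2) ℂ)) * hA.eigenvectorUnitary = 1
    from Matrix.mem_unitaryGroup_iff'.mp hA.eigenvectorUnitary.2, one_mul]
  simp [Matrix.trace, Fin.sum_univ_two, Matrix.diagonal_apply]

lemma det_re₂ : A.det.re = hA.eigenvalues 0 * hA.eigenvalues 1 := by
  rw [hA.det_eq_prod_eigenvalues]
  simp [Fin.prod_univ_two]

end SpectralHelpers

lemma errProb_eq (p0 p1 p2 : ℝ) (ψ0 ψ1 ψ2 : Fin 2 → ℂ) (P0 : Matrix (Fin 2) (Fin 2) ℂ)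
    (h0 : (ketbra ψ0).trace = 1) :
    errProb p0 p1 p2 ψ0 ψ1 ψ2 P0 (1 - P0)
      = p0 - ((P0 * ((p0:ℂ) • ketbra ψ0 - (p1:ℂ) • ketbra ψ1 - (p2:ℂ) • ketbra ψ2)).trace).re := by
  rw [errProb]
  have key : (p0 : ℂ) * ((1 - P0) * ketbra ψ0).trace
      + (P0 * ((p1:ℂ) • ketbra ψ1 + (p2:ℂ) • ketbra ψ2)).trace
      = (p0:ℂ) - (P0 * ((p0:ℂ) • ketbra ψ0 - (p1:ℂ) • ketbra ψ1 - (p2:ℂ) • ketbra ψ2)).trace := by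
    rw [Matrix.sub_mul, Matrix.one_mul, Matrix.mul_add, Matrix.mul_sub, Matrix.mul_sub,
      Matrix.mul_smul, Matrix.mul_smul, Matrix.mul_smul, Matrix.trace_sub, Matrix.trace_add,
      Matrix.trace_sub, Matrix.trace_sub, Matrix.trace_smul, Matrix.trace_smul, Matrix.trace_smul,
      h0]
    simp only [smul_eq_mul]
    ring
  rw [key, Complex.sub_re, Complex.ofReal_re]

theorem stmt_1 (ψ0 ψ1 ψ2 : Fin 2 → ℂ) (p0 p1 p2 : ℝ)
    (hu0 : ∑ i, ‖ψ0 i‖ ^ 2 = 1)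
    (hu1 : ∑ i, ‖ψ1 i‖ ^ 2 = 1)
    (hu2 : ∑ i, ‖ψ2 i‖ ^ 2 = 1)
    (hp0 : 0 ≤ p0) (hp1 : 0 ≤ p1) (hp2 : 0 ≤ p2)
    (hsum : p0 + p1 + p2 = 1)
    (hdet : ((p0 : ℂ) • ketbra ψ0 - (p1 : ℂ) • ketbra ψ1 - (p2 : ℂ) • ketbra ψ2).det.re ≤ 0) :
    (∀ P0 P1 : Matrix (Fin 2) (Fin 2) ℂ, P0.PosSemidef → P1.PosSemidef → P0 + P1 = 1 →
      1/2 - 1/2 * Real.sqrt ((p0 - p1 - p2) ^ 2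
          - 4 * ((p0 : ℂ) • ketbra ψ0 - (p1 : ℂ) • ketbra ψ1 - (p2 : ℂ) • ketbra ψ2).det.re)
        ≤ errProb p0 p1 p2 ψ0 ψ1 ψ2 P0 P1) ∧
    (∃ P0 P1 : Matrix (Fin 2) (Fin 2) ℂ, P0.PosSemidef ∧ P1.PosSemidef ∧ P0 + P1 = 1 ∧
      errProb p0 p1 p2 ψ0 ψ1 ψ2 P0 P1
        = 1/2 - 1/2 * Real.sqrt ((p0 - p1 - p2) ^ 2
            - 4 * ((p0 : ℂ) • ketbra ψ0 - (p1 : ℂ) • ketbra ψ1 - (p2 : ℂ) • ketbra ψ2).det.re)) := by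
  have htr0 := ketbra_trace hu0
  have htr1 := ketbra_trace hu1
  have htr2 := ketbra_trace hu2
  set Δ : Matrix (Fin 2) (Fin 2) ℂ :=
    (p0 : ℂ) • ketbra ψ0 - (p1 : ℂ) • ketbra ψ1 - (p2 : ℂ) • ketbra ψ2 with hΔdef
  have hherm : Δ.IsHermitian := by
    show _ = _
    ext i j
    simp only [hΔdef, Matrix.conjTranspose_apply, Matrix.sub_apply, Matrix.smul_apply, ketbra,
      vecMulVec_apply, Pi.star_apply, RCLike.star_def, smul_eq_mul, map_sub, _root_.map_mul,
      Complex.conj_conj, Complex.conj_ofReal]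
    ring
  have htrΔ : Δ.trace = ((p0 - p1 - p2 : ℝ) : ℂ) := by
    rw [hΔdef, Matrix.trace_sub, Matrix.trace_sub, Matrix.trace_smul, Matrix.trace_smul,
      Matrix.trace_smul, htr0, htr1, htr2]
    simp only [smul_eq_mul, mul_one]
    push_cast
    ring
  have hsum_e : hherm.eigenvalues 0 + hherm.eigenvalues 1 = p0 - p1 - p2 := by
    have h2 := trace_eq₂ hherm
    rw [htrΔ] at h2
    exact_mod_cast h2.symm
  have hprod_e : hherm.eigenvalues 0 * hherm.eigenvalues 1 = Δ.det.re := (det_re₂ hherm).symm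
  have hdet' : hherm.eigenvalues 0 * hherm.eigenvalues 1 ≤ 0 := by rw [hprod_e]; exact hdet
  have hkey : Real.sqrt ((p0 - p1 - p2) ^ 2 - 4 * Δ.det.re)
      = |hherm.eigenvalues 0 - hherm.eigenvalues 1| := by
    rw [← hsum_e, ← hprod_e,
      show (hherm.eigenvalues 0 + hherm.eigenvalues 1) ^ 2
          - 4 * (hherm.eigenvalues 0 * hherm.eigenvalues 1)
        = (hherm.eigenvalues 0 - hherm.eigenvalues 1) ^ 2 by ring,
      Real.sqrt_sq_eq_abs]
  have hPD : ∀ P : Matrix (Fin 2) (Fin 2) ℂ,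
      ((P * Δ).trace).re = hherm.eigenvalues 0 * ((P * Qm hherm 0).trace).re
        + hherm.eigenvalues 1 * ((P * Qm hherm 1).trace).re := by
    intro P
    conv_lhs => rw [spectral2 hherm]
    rw [Matrix.mul_add, Matrix.mul_smul, Matrix.mul_smul, Matrix.trace_add, Matrix.trace_smul,
      Matrix.trace_smul, Complex.add_re]
    simp only [smul_eq_mul, Complex.re_ofReal_mul]
  have haux : ∀ (P0 P1 : Matrix (Fin 2) (Fin 2) ℂ), P0.PosSemidef → P1.PosSemidef →
      P0 + P1 = 1 → ∀ i, ((P0 * Qm hherm i).trace).re ≤ 1 := by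
    intro P0 P1 h0 h1 hs i
    have hsplit : (P0 * Qm hherm i).trace + (P1 * Qm hherm i).trace = 1 := by
      rw [← Matrix.trace_add, ← Matrix.add_mul, hs, Matrix.one_mul, Qm_trace]
    have h2 := trace_mul_psd_re_nonneg h1 (Qm_psd hherm i)
    have h3 := congrArg Complex.re hsplit
    rw [Complex.add_re, Complex.one_re] at h3
    linarith
  constructor
  · intro P0 P1 hP0 hP1 hs
    have hP1' : P1 = 1 - P0 := eq_sub_of_add_eq' hs
    rw [hP1', errProb_eq p0 p1 p2 ψ0 ψ1 ψ2 P0 htr0, ← hΔdef, hkey, hPD P0]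
    have h00 : 0 ≤ ((P0 * Qm hherm 0).trace).re := trace_mul_psd_re_nonneg hP0 (Qm_psd hherm 0)
    have h01 : 0 ≤ ((P0 * Qm hherm 1).trace).re := trace_mul_psd_re_nonneg hP0 (Qm_psd hherm 1)
    have hle0 : ((P0 * Qm hherm 0).trace).re ≤ 1 := haux P0 P1 hP0 hP1 hs 0
    have hle1 : ((P0 * Qm hherm 1).trace).re ≤ 1 := haux P0 P1 hP0 hP1 hs 1
    rcases mul_nonpos_iff.mp hdet' with ⟨ha, hb⟩ | ⟨ha, hb⟩
    · rw [abs_of_nonneg (by linarith)]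
      nlinarith [mul_le_of_le_one_right ha hle0, mul_nonpos_of_nonpos_of_nonneg hb h01]
    · rw [abs_of_nonpos (by linarith)]
      nlinarith [mul_le_of_le_one_right hb hle1, mul_nonpos_of_nonpos_of_nonneg ha h00]
  · rcases mul_nonpos_iff.mp hdet' with ⟨ha, hb⟩ | ⟨ha, hb⟩
    · refine ⟨Qm hherm 0, Qm hherm 1, Qm_psd hherm 0, Qm_psd hherm 1, Qm_sum hherm, ?_⟩
      have hq : Qm hherm 1 = 1 - Qm hherm 0 := eq_sub_of_add_eq' (Qm_sum hherm)
      rw [hq, errProb_eq p0 p1 p2 ψ0 ψ1 ψ2 _ htr0, ← hΔdef, hkey, hPD]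
      have e00 : ((Qm hherm 0 * Qm hherm 0).trace).re = 1 := by
        rw [Qm_mul_trace hherm 0 0]; simp
      have e01 : ((Qm hherm 0 * Qm hherm 1).trace).re = 0 := by
        rw [Qm_mul_trace hherm 0 1]; simp
      rw [e00, e01, abs_of_nonneg (by linarith)]
      linarith
    · refine ⟨Qm hherm 1, Qm hherm 0, Qm_psd hherm 1, Qm_psd hherm 0, by
        rw [add_comm]; exact Qm_sum hherm, ?_⟩
      have hq : Qm hherm 0 = 1 - Qm hherm 1 := eq_sub_of_add_eq (Qm_sum hherm)
      rw [hq, errProb_eq p0 p1 p2 ψ0 ψ1 ψ2 _ htr0, ← hΔdef, hkey, hPD]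
      have e10 : ((Qm hherm 1 * Qm hherm 0).trace).re = 0 := by
        rw [Qm_mul_trace hherm 1 0]; simp
      have e11 : ((Qm hherm 1 * Qm hherm 1).trace).re = 1 := by
        rw [Qm_mul_trace hherm 1 1]; simp
      rw [e10, e11, abs_of_nonpos (by linarith)]
      linarith
end

section
/- Let ψ0, ψ1, ψ2 be unit vectors in ℂ² and p0, p1, p2 ≥ 0 reals with p0 + p1 + p2 = 1, and set Δ := p0|ψ0⟩⟨ψ0| − p1|ψ1⟩⟨ψ1| − p2|ψ2⟩⟨ψ2|. If det Δ ≥ 0 (det Δ is real since Δ is Hermitian), then the minimum of the error probability over all two-outcome POVMs on ℂ² equals 1/2 − (1/2)·|p0 − p1 − p2|; that is, every two-outcome POVM has error probability at least this value, and some two-outcome POVM attains it. -/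
open Matrix
open scoped ComplexOrder

lemma ketbra_isHermitian (ψ : Fin 2 → ℂ) : (ketbra ψ).IsHermitian := by
  ext i j
  simp [ketbra, Matrix.conjTranspose_apply, Matrix.vecMulVec_apply, mul_comm]

lemma trace_ketbra (ψ : Fin 2 → ℂ) (hu : ∑ i, ‖ψ i‖ ^ 2 = 1) :
    (ketbra ψ).trace = 1 := by
  have h : (ketbra ψ).trace = ψ 0 * starRingEnd ℂ (ψ 0) + ψ 1 * starRingEnd ℂ (ψ 1) := by
    simp [Matrix.trace, Matrix.diag, ketbra, Matrix.vecMulVec_apply, Fin.sum_univ_two]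
  rw [Fin.sum_univ_two] at hu
  rw [h, Complex.mul_conj, Complex.mul_conj, ← Complex.ofReal_add,
    ← Complex.sq_norm (ψ 0), ← Complex.sq_norm (ψ 1), hu, Complex.ofReal_one]

lemma psd_trace_re_nonneg_s2 {A : Matrix (Fin 2) (Fin 2) ℂ} (hA : A.PosSemidef) :
    0 ≤ A.trace.re := by
  have h : ∀ i, 0 ≤ (A i i).re := by
    intro i
    exact (Complex.le_def.mp (hA.diag_nonneg (i := i))).1
  simp only [Matrix.trace, Matrix.diag, Complex.re_sum]
  exact Finset.sum_nonneg fun i _ => h i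

open scoped MatrixOrder

lemma trace_mul_psd_nonneg {A B : Matrix (Fin 2) (Fin 2) ℂ}
    (hA : A.PosSemidef) (hB : B.PosSemidef) : 0 ≤ ((A * B).trace).re := by
  have hs : (CFC.sqrt A).PosSemidef := (CFC.sqrt_nonneg A).posSemidef
  have h1 : A = CFC.sqrt A * CFC.sqrt A := (CFC.sqrt_mul_sqrt_self A hA.nonneg).symm
  have h2 : (A * B).trace = (CFC.sqrt A * B * CFC.sqrt A).trace := by
    have : (A * B).trace = (CFC.sqrt A * CFC.sqrt A * B).trace := by rw [← h1]
    rw [this, Matrix.trace_mul_cycle, Matrix.trace_mul_cycle]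
  rw [h2]
  have h3 : (CFC.sqrt A * B * (CFC.sqrt A)ᴴ).PosSemidef := hB.mul_mul_conjTranspose_same _
  rw [hs.1.eq] at h3
  exact psd_trace_re_nonneg_s2 h3

lemma trace_eq_sum_eigs {A : Matrix (Fin 2) (Fin 2) ℂ} (hA : A.IsHermitian) :
    A.trace = ∑ i, (hA.eigenvalues i : ℂ) := by
  conv_lhs => rw [hA.spectral_theorem]
  rw [Unitary.conjStarAlgAut_apply, Matrix.trace_mul_cycle,
    Unitary.coe_star_mul_self, Matrix.one_mul]
  simp [Matrix.trace_diagonal]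

lemma posSemidef_of_trace_det {A : Matrix (Fin 2) (Fin 2) ℂ} (hA : A.IsHermitian)
    (ht : 0 ≤ A.trace.re) (hd : 0 ≤ A.det.re) : A.PosSemidef := by
  apply hA.posSemidef_iff_eigenvalues_nonneg.mpr
  have e1 : A.trace.re = hA.eigenvalues 0 + hA.eigenvalues 1 := by
    rw [trace_eq_sum_eigs hA, Fin.sum_univ_two]; simp
  have e2 : A.det.re = hA.eigenvalues 0 * hA.eigenvalues 1 := by
    rw [hA.det_eq_prod_eigenvalues, Fin.prod_univ_two]
    simp [Complex.mul_re]
  rw [e1] at ht; rw [e2] at hd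
  intro i
  fin_cases i
  · show (0:ℝ) ≤ hA.eigenvalues 0; nlinarith
  · show (0:ℝ) ≤ hA.eigenvalues 1; nlinarith

lemma herm_real_smul (r : ℝ) {M : Matrix (Fin 2) (Fin 2) ℂ} (h : M.IsHermitian) :
    ((r : ℂ) • M).IsHermitian := by
  unfold Matrix.IsHermitian
  rw [Matrix.conjTranspose_smul, Complex.star_def, Complex.conj_ofReal, h.eq]

theorem stmt_2 (ψ0 ψ1 ψ2 : Fin 2 → ℂ) (p0 p1 p2 : ℝ)
    (hu0 : ∑ i, ‖ψ0 i‖ ^ 2 = 1)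
    (hu1 : ∑ i, ‖ψ1 i‖ ^ 2 = 1)
    (hu2 : ∑ i, ‖ψ2 i‖ ^ 2 = 1)
    (hp0 : 0 ≤ p0) (hp1 : 0 ≤ p1) (hp2 : 0 ≤ p2)
    (hsum : p0 + p1 + p2 = 1)
    (hdet : 0 ≤ ((p0 : ℂ) • ketbra ψ0 - (p1 : ℂ) • ketbra ψ1 - (p2 : ℂ) • ketbra ψ2).det.re) :
    (∀ P0 P1 : Matrix (Fin 2) (Fin 2) ℂ, P0.PosSemidef → P1.PosSemidef → P0 + P1 = 1 →
      1/2 - 1/2 * |p0 - p1 - p2|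
        ≤ errProb p0 p1 p2 ψ0 ψ1 ψ2 P0 P1) ∧
    (∃ P0 P1 : Matrix (Fin 2) (Fin 2) ℂ, P0.PosSemidef ∧ P1.PosSemidef ∧ P0 + P1 = 1 ∧
      errProb p0 p1 p2 ψ0 ψ1 ψ2 P0 P1 = 1/2 - 1/2 * |p0 - p1 - p2|) := by
  set Δ : Matrix (Fin 2) (Fin 2) ℂ :=
    (p0 : ℂ) • ketbra ψ0 - (p1 : ℂ) • ketbra ψ1 - (p2 : ℂ) • ketbra ψ2 with hΔdef
  have htr0 := trace_ketbra ψ0 hu0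
  have htr1 := trace_ketbra ψ1 hu1
  have htr2 := trace_ketbra ψ2 hu2
  have hΔherm : Δ.IsHermitian :=
    (((herm_real_smul p0 (ketbra_isHermitian ψ0)).sub
      (herm_real_smul p1 (ketbra_isHermitian ψ1))).sub
      (herm_real_smul p2 (ketbra_isHermitian ψ2)))
  have hΔtr : Δ.trace.re = p0 - p1 - p2 := by
    rw [hΔdef]
    simp [Matrix.trace_sub, Matrix.trace_smul, htr0, htr1, htr2, smul_eq_mul]
  have key : ∀ P0 P1 : Matrix (Fin 2) (Fin 2) ℂ, P0 + P1 = 1 →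
      errProb p0 p1 p2 ψ0 ψ1 ψ2 P0 P1 = p0 - ((P0 * Δ).trace).re := by
    intro P0 P1 h
    have hP1 : P1 = 1 - P0 := by rw [← h]; abel
    subst hP1
    have hc : (p0 : ℂ) * ((1 - P0) * ketbra ψ0).trace
        + (P0 * ((p1 : ℂ) • ketbra ψ1 + (p2 : ℂ) • ketbra ψ2)).trace
        = (p0 : ℂ) - (P0 * Δ).trace := by
      rw [hΔdef]
      simp only [Matrix.sub_mul, Matrix.one_mul, Matrix.mul_sub, Matrix.mul_add,
        Matrix.mul_smul, Matrix.trace_sub, Matrix.trace_add, Matrix.trace_smul,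
        htr0, smul_eq_mul]
      ring
    rw [errProb, hc, Complex.sub_re, Complex.ofReal_re]
  constructor
  · intro P0 P1 h0 h1 hP
    rw [key P0 P1 hP]
    have hsplit : (P0 * Δ).trace.re + (P1 * Δ).trace.re = Δ.trace.re := by
      rw [← Complex.add_re, ← Matrix.trace_add, ← Matrix.add_mul, hP, Matrix.one_mul]
    rcases le_or_gt 0 (p0 - p1 - p2) with ht | ht
    · have hΔpsd : Δ.PosSemidef := posSemidef_of_trace_det hΔherm (by rw [hΔtr]; exact ht) hdet
      have hb := trace_mul_psd_nonneg h1 hΔpsd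
      rw [abs_of_nonneg ht]
      linarith [hsplit, hΔtr]
    · have hnd : 0 ≤ (-Δ).det.re := by
        rw [Matrix.det_neg]
        simpa using hdet
      have hΔpsd : (-Δ).PosSemidef := posSemidef_of_trace_det hΔherm.neg
        (by rw [Matrix.trace_neg, Complex.neg_re, hΔtr]; linarith) hnd
      have hb := trace_mul_psd_nonneg h0 hΔpsd
      rw [Matrix.mul_neg, Matrix.trace_neg, Complex.neg_re] at hb
      rw [abs_of_neg ht]
      linarith
  · rcases le_or_gt 0 (p0 - p1 - p2) with ht | ht
    · refine ⟨1, 0, Matrix.PosSemidef.one, Matrix.PosSemidef.zero, by simp, ?_⟩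
      rw [key 1 0 (by simp), Matrix.one_mul, abs_of_nonneg ht]
      linarith [hΔtr]
    · refine ⟨0, 1, Matrix.PosSemidef.zero, Matrix.PosSemidef.one, by simp, ?_⟩
      rw [key 0 1 (by simp), Matrix.zero_mul, Matrix.trace_zero, abs_of_neg ht]
      norm_num
      linarith
end

section
/- Let q1 ∈ [0, 1] and x1 ∈ [−1, 1] be real numbers satisfying q1·x1 ≤ 1 − q1. Then q1·(x1/2 + √(1 + x1)/√2) ≤ 3/4, with equality attained at q1 = 1/2 and x1 = 1. Consequently, the error expression (1/2)·(1 − q1·(x1/2 + √(1 + x1)/√2)) is at least 1/8. -/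
theorem stmt_5 (q1 x1 : ℝ) (hq : q1 ∈ Set.Icc (0 : ℝ) 1) (hx : x1 ∈ Set.Icc (-1 : ℝ) 1)
    (hcon : q1 * x1 ≤ 1 - q1) :
    (q1 * (x1 / 2 + Real.sqrt (1 + x1) / Real.sqrt 2) ≤ 3/4) ∧
    ((1/2 : ℝ) * (1 / 2 + Real.sqrt (1 + 1) / Real.sqrt 2) = 3/4) ∧
    ((1/2) * (1 - q1 * (x1 / 2 + Real.sqrt (1 + x1) / Real.sqrt 2)) ≥ 1/8) := by
  obtain ⟨hq0, hq1⟩ := hq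
  obtain ⟨hx0, hx1⟩ := hx
  have h1x : (0:ℝ) ≤ 1 + x1 := by linarith
  set s := Real.sqrt ((1 + x1) / 2) with hs
  have hs0 : 0 ≤ s := Real.sqrt_nonneg _
  have hs2 : s ^ 2 = (1 + x1) / 2 := Real.sq_sqrt (by linarith)
  have hrw : Real.sqrt (1 + x1) / Real.sqrt 2 = s := by
    rw [hs, Real.sqrt_div h1x]
  have hcon' : q1 * s ^ 2 ≤ 1 / 2 := by rw [hs2]; linarith
  have hkey : q1 * (s - 1/2) ≤ 1/4 := by
    rcases le_or_gt s (1/2) with h | h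
    · have : q1 * (s - 1/2) ≤ 0 := mul_nonpos_of_nonneg_of_nonpos hq0 (by linarith)
      linarith
    · nlinarith [sq_nonneg (s - 1), mul_nonneg (by linarith : (0:ℝ) ≤ 2*s - 1)
        (by linarith : (0:ℝ) ≤ 1/2 - q1 * s ^ 2), sq_nonneg s]
  have hmain : q1 * (x1 / 2 + s) ≤ 3/4 := by nlinarith [hcon', hkey, hs2]
  have heq : (1/2 : ℝ) * (1 / 2 + Real.sqrt (1 + 1) / Real.sqrt 2) = 3/4 := by
    have : Real.sqrt (1 + 1) = Real.sqrt 2 := by norm_num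
    rw [this, div_self (by positivity)]
    norm_num
  exact ⟨by rw [hrw]; exact hmain, heq, by rw [hrw]; linarith⟩
end

section
/- For every real p with 0 < p < 1, one has √(4 − 3p) + √(4 + 5p) > 4; equivalently, the two-way LOCC error probability (1/16)·(6 − √(4 − 3p) − √(4 + 5p)) is strictly less than 1/8, the optimal one-way LOCC error probability. At p = 0 and p = 1 the expression equals exactly 1/8. -/
theorem stmt_11 :
    (∀ p : ℝ, 0 < p → p < 1 →
      Real.sqrt (4 - 3 * p) + Real.sqrt (4 + 5 * p) > 4 ∧
      (1/16) * (6 - Real.sqrt (4 - 3 * p) - Real.sqrt (4 + 5 * p)) < 1/8) ∧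
    (1/16 : ℝ) * (6 - Real.sqrt (4 - 3 * 0) - Real.sqrt (4 + 5 * 0)) = 1/8 ∧
    (1/16 : ℝ) * (6 - Real.sqrt (4 - 3 * 1) - Real.sqrt (4 + 5 * 1)) = 1/8 := by
  have h4 : Real.sqrt 4 = 2 := by
    rw [show (4:ℝ) = 2^2 by norm_num, Real.sqrt_sq (by norm_num)]
  have h9 : Real.sqrt 9 = 3 := by
    rw [show (9:ℝ) = 3^2 by norm_num, Real.sqrt_sq (by norm_num)]
  refine ⟨?_, ?_, ?_⟩
  · intro p hp hp1
    set a := Real.sqrt (4 - 3 * p) with ha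
    set b := Real.sqrt (4 + 5 * p) with hb
    have ha0 : 0 ≤ a := Real.sqrt_nonneg _
    have hb0 : 0 ≤ b := Real.sqrt_nonneg _
    have ha2 : a ^ 2 = 4 - 3 * p := Real.sq_sqrt (by nlinarith)
    have hb2 : b ^ 2 = 4 + 5 * p := Real.sq_sqrt (by nlinarith)
    have hab : 0 ≤ a * b := mul_nonneg ha0 hb0
    have key : a + b > 4 := by
      by_contra h
      push_neg at h
      have h1 : a * b ≤ 4 - p := by nlinarith
      nlinarith [sq_nonneg (a*b), mul_pos hp (sub_pos.mpr hp1)]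
    exact ⟨key, by linarith⟩
  · norm_num [h4]
  · norm_num [h4, h9]
end

section
/- For every real p with 0 ≤ p ≤ 1, one has √(4 − 3p) + √(4 + 5p) < 2·√5; equivalently, the two-way LOCC error probability (1/16)·(6 − √(4 − 3p) − √(4 + 5p)) is strictly greater than (1/8)·(3 − √5), the minimal error probability attainable by separable operations. -/
theorem stmt_12 (p : ℝ) (hp0 : 0 ≤ p) (hp1 : p ≤ 1) :
    Real.sqrt (4 - 3 * p) + Real.sqrt (4 + 5 * p) < 2 * Real.sqrt 5 ∧
    (1/16) * (6 - Real.sqrt (4 - 3 * p) - Real.sqrt (4 + 5 * p)) > (1/8) * (3 - Real.sqrt 5) := by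
  have h1 : (0:ℝ) ≤ 4 - 3 * p := by linarith
  have h2 : (0:ℝ) ≤ 4 + 5 * p := by linarith
  set a := Real.sqrt (4 - 3 * p) with ha_def
  set b := Real.sqrt (4 + 5 * p) with hb_def
  have ha : a ^ 2 = 4 - 3 * p := Real.sq_sqrt h1
  have hb : b ^ 2 = 4 + 5 * p := Real.sq_sqrt h2
  have ha0 : 0 ≤ a := Real.sqrt_nonneg _
  have hb0 : 0 ≤ b := Real.sqrt_nonneg _
  have hs : Real.sqrt 5 ^ 2 = 5 := Real.sq_sqrt (by norm_num)
  have hs0 : 0 < Real.sqrt 5 := Real.sqrt_pos.mpr (by norm_num)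
  have hab : a * b < 6 - p := by
    have hm : a * b = Real.sqrt ((4 - 3 * p) * (4 + 5 * p)) := (Real.sqrt_mul h1 _).symm
    rw [hm]
    have hlt : (4 - 3 * p) * (4 + 5 * p) < (6 - p) ^ 2 := by nlinarith [sq_nonneg (1 - p)]
    calc Real.sqrt ((4 - 3 * p) * (4 + 5 * p))
        < Real.sqrt ((6 - p) ^ 2) := Real.sqrt_lt_sqrt (mul_nonneg h1 h2) hlt
      _ = 6 - p := Real.sqrt_sq (by linarith)
  have hsq : (a + b) ^ 2 < 20 := by nlinarith
  have key : a + b < 2 * Real.sqrt 5 := by nlinarith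
  exact ⟨key, by linarith⟩
end

section
/- Let v ∈ ℂ³⊗ℂ³ be a product vector, i.e. v = a ⊗ b for some a, b ∈ ℂ³ (Kronecker product). If v lies in the linear span of the four domino states ψ_{1+}, ψ_{2+}, ψ_{3+}, ψ_{4+}, then v is a scalar multiple of one of ψ_{1+}, ψ_{2+}, ψ_{3+}, ψ_{4+}. In other words, up to scalars the ψ_{i+} are the unique product states in their span. -/
open Matrix

/-- Kronecker product of vectors. -/
noncomputable def vkron {m n : Type*} (a : m → ℂ) (b : n → ℂ) : m × n → ℂ :=
  fun p => a p.1 * b p.2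

/-- Normalized sum `(a + b)/√2` of two vectors in `ℂ³`. -/
noncomputable def nplus (a b : Fin 3 → ℂ) : Fin 3 → ℂ :=
  (Real.sqrt 2 : ℂ)⁻¹ • (a + b)

noncomputable def e0 : Fin 3 → ℂ := ![1, 0, 0]
noncomputable def e1 : Fin 3 → ℂ := ![0, 1, 0]
noncomputable def e2 : Fin 3 → ℂ := ![0, 0, 1]

/-- Domino state `ψ_{1+} = |0⟩ ⊗ (|0⟩+|1⟩)/√2`. -/
noncomputable def ψ1p : Fin 3 × Fin 3 → ℂ := vkron e0 (nplus e0 e1)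
/-- Domino state `ψ_{2+} = (|0⟩+|1⟩)/√2 ⊗ |2⟩`. -/
noncomputable def ψ2p : Fin 3 × Fin 3 → ℂ := vkron (nplus e0 e1) e2
/-- Domino state `ψ_{3+} = (|1⟩+|2⟩)/√2 ⊗ |0⟩`. -/
noncomputable def ψ3p : Fin 3 × Fin 3 → ℂ := vkron (nplus e1 e2) e0
/-- Domino state `ψ_{4+} = |2⟩ ⊗ (|1⟩+|2⟩)/√2`. -/
noncomputable def ψ4p : Fin 3 × Fin 3 → ℂ := vkron e2 (nplus e1 e2)

theorem stmt_13 (v : Fin 3 × Fin 3 → ℂ) (a b : Fin 3 → ℂ) (hv : v = vkron a b)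
    (hspan : v ∈ Submodule.span ℂ ({ψ1p, ψ2p, ψ3p, ψ4p} : Set (Fin 3 × Fin 3 → ℂ))) :
    (∃ c : ℂ, v = c • ψ1p) ∨ (∃ c : ℂ, v = c • ψ2p) ∨
    (∃ c : ℂ, v = c • ψ3p) ∨ (∃ c : ℂ, v = c • ψ4p) := by
  classical
  have hs : ((Real.sqrt 2 : ℂ))⁻¹ ≠ 0 := by
    simp [Real.sqrt_eq_zero']
  obtain ⟨c1, c2, c3, c4, hv'⟩ : ∃ c1 c2 c3 c4 : ℂ,
      v = c1 • ψ1p + c2 • ψ2p + c3 • ψ3p + c4 • ψ4p := by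
    simp only [Submodule.mem_span_insert, Submodule.mem_span_singleton] at hspan
    obtain ⟨c1, y, ⟨c2, y2, ⟨c3, y3, ⟨c4, h4⟩, h3⟩, h2⟩, h1⟩ := hspan
    exact ⟨c1, c2, c3, c4, by rw [h1, h2, h3, h4]; ring⟩
  have heq := hv.symm.trans hv'
  set s : ℂ := ((Real.sqrt 2 : ℂ))⁻¹ with hsdef
  have comp : ∀ p : Fin 3 × Fin 3, a p.1 * b p.2 =
      c1 • ψ1p p + c2 • ψ2p p + c3 • ψ3p p + c4 • ψ4p p := by
    intro p
    have := congrFun heq p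
    simpa [vkron] using this
  have h00 := comp (0, 0); have h01 := comp (0, 1); have h02 := comp (0, 2)
  have h10 := comp (1, 0); have h11 := comp (1, 1); have h12 := comp (1, 2)
  have h20 := comp (2, 0); have h21 := comp (2, 1); have h22 := comp (2, 2)
  simp only [ψ1p, ψ2p, ψ3p, ψ4p, vkron, nplus, e0, e1, e2, Pi.smul_apply, Pi.add_apply,
    smul_eq_mul, Matrix.cons_val_zero, Matrix.cons_val_one, Matrix.head_cons,
    Matrix.cons_val_two, Matrix.tail_cons, ← hsdef] at h00 h01 h02 h10 h11 h12 h20 h21 h22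
  ring_nf at h00 h01 h02 h10 h11 h12 h20 h21 h22
  -- h11 : a 1 * b 1 = 0
  have hab : a 1 = 0 ∨ b 1 = 0 := mul_eq_zero.mp (by linear_combination h11)
  rcases hab with ha | hb
  · -- c2 = c3 = 0
    have hc3 : c3 = 0 := by
      have : c3 * s = 0 := by linear_combination -h10 + b 0 * ha
      exact (mul_eq_zero.mp this).resolve_right hs
    have hc2 : c2 = 0 := by
      have : c2 * s = 0 := by linear_combination -h12 + b 2 * ha
      exact (mul_eq_zero.mp this).resolve_right hs
    have hminor : c1 * c4 = 0 := by
      have e1 : a 0 * b 1 = c1 * s := by linear_combination h01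
      have e2 : a 2 * b 2 = c4 * s := by linear_combination h22
      have e3 : a 0 * b 2 = c2 * s := by linear_combination h02
      have e4 : a 2 * b 1 = c4 * s := by linear_combination h21
      have key : (c1 * s) * (c4 * s) = (c2 * s) * (c4 * s) := by
        linear_combination -(c4*s)*e1 - (a 0 * b 1)*e2 + (c4*s)*e3 + (a 0 * b 2)*e4
      have : (c1 - c2) * c4 * (s * s) = 0 := by linear_combination key
      rcases mul_eq_zero.mp this with h | h
      · rcases mul_eq_zero.mp h with h' | h'
        · rw [hc2] at h'; simp at h'; simp [h']
        · simp [h']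
      · exact absurd (mul_eq_zero.mp h) (by push_neg; exact ⟨hs, hs⟩)
    rcases mul_eq_zero.mp hminor with hc1 | hc4
    · right; right; right
      exact ⟨c4, by rw [hv', hc1, hc2, hc3]; simp⟩
    · left
      exact ⟨c1, by rw [hv', hc2, hc3, hc4]; simp⟩
  · -- c1 = c4 = 0
    have hc1 : c1 = 0 := by
      have : c1 * s = 0 := by linear_combination -h01 + a 0 * hb
      exact (mul_eq_zero.mp this).resolve_right hs
    have hc4 : c4 = 0 := by
      have : c4 * s = 0 := by linear_combination -h21 + a 2 * hb
      exact (mul_eq_zero.mp this).resolve_right hs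
    have hminor : c2 * c3 = 0 := by
      have e1 : a 1 * b 0 = c3 * s := by linear_combination h10
      have e2 : a 2 * b 2 = c4 * s := by linear_combination h22
      have e3 : a 1 * b 2 = c2 * s := by linear_combination h12
      have e4 : a 2 * b 0 = c3 * s := by linear_combination h20
      have key : (c3 * s) * (c4 * s) = (c2 * s) * (c3 * s) := by
        linear_combination -(c4*s)*e1 - (a 1 * b 0)*e2 + (c3*s)*e3 + (a 1 * b 2)*e4
      have : (c4 - c2) * c3 * (s * s) = 0 := by linear_combination key
      rcases mul_eq_zero.mp this with h | h
      · rcases mul_eq_zero.mp h with h' | h'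
        · rw [hc4] at h'
          have : c2 = 0 := by linear_combination -h'
          simp [this]
        · simp [h']
      · exact absurd (mul_eq_zero.mp h) (by push_neg; exact ⟨hs, hs⟩)
    rcases mul_eq_zero.mp hminor with hc2 | hc3
    · right; right; left
      exact ⟨c3, by rw [hv', hc1, hc2, hc4]; simp⟩
    · right; left
      exact ⟨c2, by rw [hv', hc1, hc3, hc4]; simp⟩
end

section
/- Let A and B be positive semidefinite 3×3 complex matrices, and suppose that for each i ∈ {1, 2, 3, 4} there is a real c_i ≥ 0 with (A ⊗ B)·ψ_{i+} = c_i·ψ_{i+}, where ψ_{1+}, ψ_{2+}, ψ_{3+}, ψ_{4+} are the four domino states. If at least two of the c_i are strictly positive, then A and B are each a nonnegative scalar multiple of the 3×3 identity matrix (hence A ⊗ B is a positive scalar multiple of the identity on ℂ³⊗ℂ³). -/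
open Matrix Kronecker
open scoped ComplexOrder

/-- The four domino states as a family. -/
noncomputable def dom : Fin 4 → (Fin 3 × Fin 3 → ℂ) := ![ψ1p, ψ2p, ψ3p, ψ4p]

lemma kron_mulVec (A B : Matrix (Fin 3) (Fin 3) ℂ) (x y : Fin 3 → ℂ) :
    (A ⊗ₖ B).mulVec (vkron x y) = vkron (A.mulVec x) (B.mulVec y) := by
  ext ⟨p, q⟩
  simp only [Matrix.mulVec, dotProduct, vkron, Fintype.sum_prod_type,
    Matrix.kroneckerMap_apply, Finset.sum_mul_sum]
  refine Finset.sum_congr rfl fun r _ => Finset.sum_congr rfl fun s _ => by ring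

lemma vkron_smul_left (s : ℂ) (x y : Fin 3 → ℂ) :
    vkron (s • x) y = s • vkron x y := by
  ext ⟨p, q⟩; simp [vkron]; ring

lemma vkron_smul_right (s : ℂ) (x y : Fin 3 → ℂ) :
    vkron x (s • y) = s • vkron x y := by
  ext ⟨p, q⟩; simp [vkron]; ring

lemma mulVec_e0 (A : Matrix (Fin 3) (Fin 3) ℂ) (p : Fin 3) : A.mulVec e0 p = A p 0 := by
  simp [Matrix.mulVec, dotProduct, Fin.sum_univ_three, e0]
lemma mulVec_e01 (A : Matrix (Fin 3) (Fin 3) ℂ) (p : Fin 3) :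
    A.mulVec (e0 + e1) p = A p 0 + A p 1 := by
  simp [Matrix.mulVec, dotProduct, Fin.sum_univ_three, e0, e1]
lemma mulVec_e12 (A : Matrix (Fin 3) (Fin 3) ℂ) (p : Fin 3) :
    A.mulVec (e1 + e2) p = A p 1 + A p 2 := by
  simp [Matrix.mulVec, dotProduct, Fin.sum_univ_three, e1, e2]
lemma mulVec_e2 (A : Matrix (Fin 3) (Fin 3) ℂ) (p : Fin 3) : A.mulVec e2 p = A p 2 := by
  simp [Matrix.mulVec, dotProduct, Fin.sum_univ_three, e2]

lemma hs2 : ((Real.sqrt 2 : ℝ) : ℂ)⁻¹ ≠ 0 := by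
  simp [Complex.ofReal_ne_zero]

theorem stmt_14 (A B : Matrix (Fin 3) (Fin 3) ℂ)
    (hA : A.PosSemidef) (hB : B.PosSemidef)
    (c : Fin 4 → ℝ) (hc : ∀ i, 0 ≤ c i)
    (heig : ∀ i, (A ⊗ₖ B).mulVec (dom i) = (c i : ℂ) • dom i)
    (htwo : ∃ i j : Fin 4, i ≠ j ∧ 0 < c i ∧ 0 < c j) :
    (∃ a : ℝ, 0 ≤ a ∧ A = (a : ℂ) • 1) ∧ (∃ b : ℝ, 0 ≤ b ∧ B = (b : ℂ) • 1) ∧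
    (∃ t : ℝ, 0 < t ∧ A ⊗ₖ B = (t : ℂ) • 1) := by
  set_option maxHeartbeats 1000000 in
  -- reduce to six cases
  have hdisj : (0 < c 0 ∧ 0 < c 1) ∨ (0 < c 0 ∧ 0 < c 2) ∨ (0 < c 0 ∧ 0 < c 3) ∨
      (0 < c 1 ∧ 0 < c 2) ∨ (0 < c 1 ∧ 0 < c 3) ∨ (0 < c 2 ∧ 0 < c 3) := by
    obtain ⟨i, j, hij, hi, hj⟩ := htwo
    fin_cases i <;> fin_cases j <;> simp_all <;> tauto
  -- Hermitian entries
  have hermA : ∀ i j, A i j = star (A j i) := fun i j => (hA.1.apply i j).symm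
  have hermB : ∀ i j, B i j = star (B j i) := fun i j => (hB.1.apply i j).symm
  -- diagonal nonnegativity
  have diagA : ∀ i, 0 ≤ A i i := fun i => by
    exact hA.diag_nonneg
  have diagB : ∀ i, 0 ≤ B i i := fun i => by
    exact hB.diag_nonneg
  -- the entrywise eigen-equations
  have E1 : ∀ p q, A p 0 * (B q 0 + B q 1) = (c 0 : ℂ) * (e0 p * (e0 + e1) q) := by
    have h2 := heig 0
    rw [show dom 0 = vkron e0 (nplus e0 e1) from rfl,
      show nplus e0 e1 = ((Real.sqrt 2 : ℝ) : ℂ)⁻¹ • (e0 + e1) from rfl,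
      vkron_smul_right, Matrix.mulVec_smul, kron_mulVec] at h2
    rw [smul_comm] at h2
    have h3 := smul_right_injective _ hs2 h2
    intro p q
    simpa [vkron, mulVec_e0, mulVec_e01] using congrFun h3 (p, q)
  have E2 : ∀ p q, (A p 0 + A p 1) * B q 2 = (c 1 : ℂ) * ((e0 + e1) p * e2 q) := by
    have h2 := heig 1
    rw [show dom 1 = vkron (nplus e0 e1) e2 from rfl,
      show nplus e0 e1 = ((Real.sqrt 2 : ℝ) : ℂ)⁻¹ • (e0 + e1) from rfl,
      vkron_smul_left, Matrix.mulVec_smul, kron_mulVec] at h2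
    rw [smul_comm] at h2
    have h3 := smul_right_injective _ hs2 h2
    intro p q
    simpa [vkron, mulVec_e01, mulVec_e2] using congrFun h3 (p, q)
  have E3 : ∀ p q, (A p 1 + A p 2) * B q 0 = (c 2 : ℂ) * ((e1 + e2) p * e0 q) := by
    have h2 := heig 2
    rw [show dom 2 = vkron (nplus e1 e2) e0 from rfl,
      show nplus e1 e2 = ((Real.sqrt 2 : ℝ) : ℂ)⁻¹ • (e1 + e2) from rfl,
      vkron_smul_left, Matrix.mulVec_smul, kron_mulVec] at h2
    rw [smul_comm] at h2
    have h3 := smul_right_injective _ hs2 h2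
    intro p q
    simpa [vkron, mulVec_e12, mulVec_e0] using congrFun h3 (p, q)
  have E4 : ∀ p q, A p 2 * (B q 1 + B q 2) = (c 3 : ℂ) * (e2 p * (e1 + e2) q) := by
    have h2 := heig 3
    rw [show dom 3 = vkron e2 (nplus e1 e2) from rfl,
      show nplus e1 e2 = ((Real.sqrt 2 : ℝ) : ℂ)⁻¹ • (e1 + e2) from rfl,
      vkron_smul_right, Matrix.mulVec_smul, kron_mulVec] at h2
    rw [smul_comm] at h2
    have h3 := smul_right_injective _ hs2 h2
    intro p q
    simpa [vkron, mulVec_e2, mulVec_e12] using congrFun h3 (p, q)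
  -- specialized facts
  have f1_00 : A 0 0 * (B 0 0 + B 0 1) = (c 0 : ℂ) := by simpa [e0, e1] using E1 0 0
  have f1_01 : A 0 0 * (B 1 0 + B 1 1) = (c 0 : ℂ) := by simpa [e0, e1] using E1 0 1
  have f1_02 : A 0 0 * (B 2 0 + B 2 1) = 0 := by simpa [e0, e1] using E1 0 2
  have f1_10 : A 1 0 * (B 0 0 + B 0 1) = 0 := by simpa [e0, e1] using E1 1 0
  have f1_11 : A 1 0 * (B 1 0 + B 1 1) = 0 := by simpa [e0, e1] using E1 1 1
  have f1_20 : A 2 0 * (B 0 0 + B 0 1) = 0 := by simpa [e0, e1] using E1 2 0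
  have f2_00 : (A 0 0 + A 0 1) * B 0 2 = 0 := by simpa [e0, e1, e2] using E2 0 0
  have f2_01 : (A 0 0 + A 0 1) * B 1 2 = 0 := by simpa [e0, e1, e2] using E2 0 1
  have f2_02 : (A 0 0 + A 0 1) * B 2 2 = (c 1 : ℂ) := by simpa [e0, e1, e2] using E2 0 2
  have f2_11 : (A 1 0 + A 1 1) * B 1 2 = 0 := by simpa [e0, e1, e2] using E2 1 1
  have f2_12 : (A 1 0 + A 1 1) * B 2 2 = (c 1 : ℂ) := by simpa [e0, e1, e2] using E2 1 2
  have f2_22 : (A 2 0 + A 2 1) * B 2 2 = 0 := by simpa [e0, e1, e2] using E2 2 2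
  have f3_00 : (A 0 1 + A 0 2) * B 0 0 = 0 := by simpa [e0, e1, e2] using E3 0 0
  have f3_10 : (A 1 1 + A 1 2) * B 0 0 = (c 2 : ℂ) := by simpa [e0, e1, e2] using E3 1 0
  have f3_11 : (A 1 1 + A 1 2) * B 1 0 = 0 := by simpa [e0, e1, e2] using E3 1 1
  have f3_12 : (A 1 1 + A 1 2) * B 2 0 = 0 := by simpa [e0, e1, e2] using E3 1 2
  have f3_20 : (A 2 1 + A 2 2) * B 0 0 = (c 2 : ℂ) := by simpa [e0, e1, e2] using E3 2 0
  have f4_01 : A 0 2 * (B 1 1 + B 1 2) = 0 := by simpa [e1, e2] using E4 0 1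
  have f4_11 : A 1 2 * (B 1 1 + B 1 2) = 0 := by simpa [e1, e2] using E4 1 1
  have f4_20 : A 2 2 * (B 0 1 + B 0 2) = 0 := by simpa [e1, e2] using E4 2 0
  have f4_21 : A 2 2 * (B 1 1 + B 1 2) = (c 3 : ℂ) := by simpa [e1, e2] using E4 2 1
  have f4_22 : A 2 2 * (B 2 1 + B 2 2) = (c 3 : ℂ) := by simpa [e1, e2] using E4 2 2
  -- final wrap-up lemma
  have main : ∀ z w : ℂ, A = z • 1 → B = w • 1 → z ≠ 0 → w ≠ 0 →
      (∃ a : ℝ, 0 ≤ a ∧ A = (a : ℂ) • 1) ∧ (∃ b : ℝ, 0 ≤ b ∧ B = (b : ℂ) • 1) ∧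
      (∃ t : ℝ, 0 < t ∧ A ⊗ₖ B = (t : ℂ) • 1) := by
    intro z w hAz hBw hz hw
    have h0z : 0 ≤ z := by
      have := diagA 0; rw [hAz] at this
      simpa [Matrix.one_apply] using this
    have h0w : 0 ≤ w := by
      have := diagB 0; rw [hBw] at this
      simpa [Matrix.one_apply] using this
    have hzre : z = (z.re : ℂ) := Complex.eq_re_of_ofReal_le (by exact_mod_cast h0z)
    have hwre : w = (w.re : ℂ) := Complex.eq_re_of_ofReal_le (by exact_mod_cast h0w)
    have hzre0 : 0 ≤ z.re := (Complex.nonneg_iff.mp h0z).1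
    have hwre0 : 0 ≤ w.re := (Complex.nonneg_iff.mp h0w).1
    have hzrene : z.re ≠ 0 := fun h => hz (by rw [hzre, h, Complex.ofReal_zero])
    have hwrene : w.re ≠ 0 := fun h => hw (by rw [hwre, h, Complex.ofReal_zero])
    refine ⟨⟨z.re, hzre0, by rw [hAz, ← hzre]⟩, ⟨w.re, hwre0, by rw [hBw, ← hwre]⟩,
      ⟨z.re * w.re, by positivity, ?_⟩⟩
    rw [hAz, hBw, Matrix.smul_kronecker, Matrix.kronecker_smul, Matrix.one_kronecker_one,
      smul_smul, Complex.ofReal_mul, ← hzre, ← hwre]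
  rcases hdisj with h | h | h | h | h | h
  · -- c 0 > 0 and c 1 > 0
    have hc1 : (c 0 : ℂ) ≠ 0 := Complex.ofReal_ne_zero.mpr (ne_of_gt h.1)
    have hc2 : (c 1 : ℂ) ≠ 0 := Complex.ofReal_ne_zero.mpr (ne_of_gt h.2)
    have hA00 : A 0 0 ≠ 0 := left_ne_zero_of_mul (ne_of_eq_of_ne f1_00 hc1)
    have hX : B 0 0 + B 0 1 ≠ 0 := right_ne_zero_of_mul (ne_of_eq_of_ne f1_00 hc1)
    have a10 : A 1 0 = 0 := (mul_eq_zero.mp f1_10).resolve_right hX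
    have a20 : A 2 0 = 0 := (mul_eq_zero.mp f1_20).resolve_right hX
    have a01 : A 0 1 = 0 := by rw [hermA 0 1, a10, star_zero]
    have a02 : A 0 2 = 0 := by rw [hermA 0 2, a20, star_zero]
    have hB22 : B 2 2 ≠ 0 := right_ne_zero_of_mul (ne_of_eq_of_ne f2_02 hc2)
    have hA0s : A 0 0 + A 0 1 ≠ 0 := left_ne_zero_of_mul (ne_of_eq_of_ne f2_02 hc2)
    have b02 : B 0 2 = 0 := (mul_eq_zero.mp f2_00).resolve_left hA0s
    have b12 : B 1 2 = 0 := (mul_eq_zero.mp f2_01).resolve_left hA0s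
    have a21 : A 2 1 = 0 := by
      have h' := (mul_eq_zero.mp f2_22).resolve_right hB22
      rwa [a20, zero_add] at h'
    have a12 : A 1 2 = 0 := by rw [hermA 1 2, a21, star_zero]
    have b20 : B 2 0 = 0 := by rw [hermB 2 0, b02, star_zero]
    have b21 : B 2 1 = 0 := by rw [hermB 2 1, b12, star_zero]
    have a11 : A 1 1 = A 0 0 := by
      have h' := mul_right_cancel₀ hB22 (f2_12.trans f2_02.symm)
      rwa [a10, zero_add, a01, add_zero] at h'
    have b10 : B 1 0 = 0 := by
      have h' := f3_11
      rw [a12, add_zero, a11] at h'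
      exact (mul_eq_zero.mp h').resolve_left hA00
    have b01 : B 0 1 = 0 := by rw [hermB 0 1, b10, star_zero]
    have hB00 : B 0 0 ≠ 0 := by
      have h' : A 0 0 * B 0 0 = (c 0 : ℂ) := by rwa [b01, add_zero] at f1_00
      exact right_ne_zero_of_mul (ne_of_eq_of_ne h' hc1)
    have a22 : A 2 2 = A 0 0 := by
      have h' := mul_right_cancel₀ hB00 (f3_20.trans f3_10.symm)
      rwa [a21, zero_add, a12, add_zero, a11] at h'
    have b11 : B 1 1 = B 0 0 := by
      have h' := mul_left_cancel₀ hA00 (f1_01.trans f1_00.symm)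
      rwa [b10, zero_add, b01, add_zero] at h'
    have hA22 : A 2 2 ≠ 0 := by rw [a22]; exact hA00
    have b22 : B 2 2 = B 0 0 := by
      have h' := mul_left_cancel₀ hA22 (f4_22.trans f4_21.symm)
      rwa [b21, zero_add, b12, add_zero, b11] at h'
    exact main (A 0 0) (B 0 0)
      (by rw [Matrix.eta_fin_three A, a01, a02, a10, a20, a12, a21, a11, a22, Matrix.one_fin_three]; simp)
      (by rw [Matrix.eta_fin_three B, b01, b02, b10, b20, b12, b21, b11, b22, Matrix.one_fin_three]; simp)
      hA00 hB00
  · -- c 0 > 0 and c 2 > 0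
    have hc1 : (c 0 : ℂ) ≠ 0 := Complex.ofReal_ne_zero.mpr (ne_of_gt h.1)
    have hc3 : (c 2 : ℂ) ≠ 0 := Complex.ofReal_ne_zero.mpr (ne_of_gt h.2)
    have hA00 : A 0 0 ≠ 0 := left_ne_zero_of_mul (ne_of_eq_of_ne f1_00 hc1)
    have hX : B 0 0 + B 0 1 ≠ 0 := right_ne_zero_of_mul (ne_of_eq_of_ne f1_00 hc1)
    have a10 : A 1 0 = 0 := (mul_eq_zero.mp f1_10).resolve_right hX
    have a20 : A 2 0 = 0 := (mul_eq_zero.mp f1_20).resolve_right hX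
    have a01 : A 0 1 = 0 := by rw [hermA 0 1, a10, star_zero]
    have a02 : A 0 2 = 0 := by rw [hermA 0 2, a20, star_zero]
    have hA1s : A 1 1 + A 1 2 ≠ 0 := left_ne_zero_of_mul (ne_of_eq_of_ne f3_10 hc3)
    have hB00 : B 0 0 ≠ 0 := right_ne_zero_of_mul (ne_of_eq_of_ne f3_10 hc3)
    have b10 : B 1 0 = 0 := (mul_eq_zero.mp f3_11).resolve_left hA1s
    have b20 : B 2 0 = 0 := (mul_eq_zero.mp f3_12).resolve_left hA1s
    have b01 : B 0 1 = 0 := by rw [hermB 0 1, b10, star_zero]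
    have b02 : B 0 2 = 0 := by rw [hermB 0 2, b20, star_zero]
    have b11 : B 1 1 = B 0 0 := by
      have h' := mul_left_cancel₀ hA00 (f1_01.trans f1_00.symm)
      rwa [b10, zero_add, b01, add_zero] at h'
    have b21 : B 2 1 = 0 := by
      have h' := (mul_eq_zero.mp f1_02).resolve_left hA00
      rwa [b20, zero_add] at h'
    have b12 : B 1 2 = 0 := by rw [hermB 1 2, b21, star_zero]
    have hB11s : B 1 1 + B 1 2 ≠ 0 := by rw [b12, add_zero, b11]; exact hB00
    have a12 : A 1 2 = 0 := (mul_eq_zero.mp f4_11).resolve_right hB11s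
    have a21 : A 2 1 = 0 := by rw [hermA 2 1, a12, star_zero]
    have hA11 : A 1 1 ≠ 0 := by rwa [a12, add_zero] at hA1s
    have a22 : A 2 2 = A 1 1 := by
      have h' := mul_right_cancel₀ hB00 (f3_20.trans f3_10.symm)
      rwa [a21, zero_add, a12, add_zero] at h'
    have hA22 : A 2 2 ≠ 0 := by rw [a22]; exact hA11
    have b22 : B 2 2 = B 0 0 := by
      have h' := mul_left_cancel₀ hA22 (f4_22.trans f4_21.symm)
      rwa [b21, zero_add, b12, add_zero, b11] at h'
    have hB22 : B 2 2 ≠ 0 := by rw [b22]; exact hB00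
    have a11 : A 1 1 = A 0 0 := by
      have h' := mul_right_cancel₀ hB22 (f2_12.trans f2_02.symm)
      rwa [a10, zero_add, a01, add_zero] at h'
    have a22' : A 2 2 = A 0 0 := a22.trans a11
    exact main (A 0 0) (B 0 0)
      (by rw [Matrix.eta_fin_three A, a01, a02, a10, a20, a12, a21, a11, a22', Matrix.one_fin_three]; simp)
      (by rw [Matrix.eta_fin_three B, b01, b02, b10, b20, b12, b21, b11, b22, Matrix.one_fin_three]; simp)
      hA00 hB00
  · -- c 0 > 0 and c 3 > 0
    have hc1 : (c 0 : ℂ) ≠ 0 := Complex.ofReal_ne_zero.mpr (ne_of_gt h.1)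
    have hc4 : (c 3 : ℂ) ≠ 0 := Complex.ofReal_ne_zero.mpr (ne_of_gt h.2)
    have hA00 : A 0 0 ≠ 0 := left_ne_zero_of_mul (ne_of_eq_of_ne f1_00 hc1)
    have hX : B 0 0 + B 0 1 ≠ 0 := right_ne_zero_of_mul (ne_of_eq_of_ne f1_00 hc1)
    have a10 : A 1 0 = 0 := (mul_eq_zero.mp f1_10).resolve_right hX
    have a20 : A 2 0 = 0 := (mul_eq_zero.mp f1_20).resolve_right hX
    have a01 : A 0 1 = 0 := by rw [hermA 0 1, a10, star_zero]
    have a02 : A 0 2 = 0 := by rw [hermA 0 2, a20, star_zero]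
    have hA22 : A 2 2 ≠ 0 := left_ne_zero_of_mul (ne_of_eq_of_ne f4_21 hc4)
    have hBs : B 1 1 + B 1 2 ≠ 0 := right_ne_zero_of_mul (ne_of_eq_of_ne f4_21 hc4)
    have a12 : A 1 2 = 0 := (mul_eq_zero.mp f4_11).resolve_right hBs
    have a21 : A 2 1 = 0 := by rw [hermA 2 1, a12, star_zero]
    have hA0s : A 0 0 + A 0 1 ≠ 0 := by rw [a01, add_zero]; exact hA00
    have b02 : B 0 2 = 0 := (mul_eq_zero.mp f2_00).resolve_left hA0s
    have b12 : B 1 2 = 0 := (mul_eq_zero.mp f2_01).resolve_left hA0s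
    have b20 : B 2 0 = 0 := by rw [hermB 2 0, b02, star_zero]
    have b21 : B 2 1 = 0 := by rw [hermB 2 1, b12, star_zero]
    have b01 : B 0 1 = 0 := by
      have h' := (mul_eq_zero.mp f4_20).resolve_left hA22
      rwa [b02, add_zero] at h'
    have b10 : B 1 0 = 0 := by rw [hermB 1 0, b01, star_zero]
    have hB00 : B 0 0 ≠ 0 := by
      have h' : A 0 0 * B 0 0 = (c 0 : ℂ) := by rwa [b01, add_zero] at f1_00
      exact right_ne_zero_of_mul (ne_of_eq_of_ne h' hc1)
    have b11 : B 1 1 = B 0 0 := by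
      have h' := mul_left_cancel₀ hA00 (f1_01.trans f1_00.symm)
      rwa [b10, zero_add, b01, add_zero] at h'
    have b22 : B 2 2 = B 0 0 := by
      have h' := mul_left_cancel₀ hA22 (f4_22.trans f4_21.symm)
      rwa [b21, zero_add, b12, add_zero, b11] at h'
    have hB22 : B 2 2 ≠ 0 := by rw [b22]; exact hB00
    have a11 : A 1 1 = A 0 0 := by
      have h' := mul_right_cancel₀ hB22 (f2_12.trans f2_02.symm)
      rwa [a10, zero_add, a01, add_zero] at h'
    have a22 : A 2 2 = A 0 0 := by
      have h' := mul_right_cancel₀ hB00 (f3_20.trans f3_10.symm)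
      rwa [a21, zero_add, a12, add_zero, a11] at h'
    exact main (A 0 0) (B 0 0)
      (by rw [Matrix.eta_fin_three A, a01, a02, a10, a20, a12, a21, a11, a22, Matrix.one_fin_three]; simp)
      (by rw [Matrix.eta_fin_three B, b01, b02, b10, b20, b12, b21, b11, b22, Matrix.one_fin_three]; simp)
      hA00 hB00
  · -- c 1 > 0 and c 2 > 0
    have hc2 : (c 1 : ℂ) ≠ 0 := Complex.ofReal_ne_zero.mpr (ne_of_gt h.1)
    have hc3 : (c 2 : ℂ) ≠ 0 := Complex.ofReal_ne_zero.mpr (ne_of_gt h.2)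
    have hB22 : B 2 2 ≠ 0 := right_ne_zero_of_mul (ne_of_eq_of_ne f2_02 hc2)
    have hA0s : A 0 0 + A 0 1 ≠ 0 := left_ne_zero_of_mul (ne_of_eq_of_ne f2_02 hc2)
    have b02 : B 0 2 = 0 := (mul_eq_zero.mp f2_00).resolve_left hA0s
    have b12 : B 1 2 = 0 := (mul_eq_zero.mp f2_01).resolve_left hA0s
    have b20 : B 2 0 = 0 := by rw [hermB 2 0, b02, star_zero]
    have b21 : B 2 1 = 0 := by rw [hermB 2 1, b12, star_zero]
    have hA1s : A 1 1 + A 1 2 ≠ 0 := left_ne_zero_of_mul (ne_of_eq_of_ne f3_10 hc3)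
    have hB00 : B 0 0 ≠ 0 := right_ne_zero_of_mul (ne_of_eq_of_ne f3_10 hc3)
    have b10 : B 1 0 = 0 := (mul_eq_zero.mp f3_11).resolve_left hA1s
    have b01 : B 0 1 = 0 := by rw [hermB 0 1, b10, star_zero]
    have hX : B 0 0 + B 0 1 ≠ 0 := by rw [b01, add_zero]; exact hB00
    have a10 : A 1 0 = 0 := (mul_eq_zero.mp f1_10).resolve_right hX
    have a01 : A 0 1 = 0 := by rw [hermA 0 1, a10, star_zero]
    have hA00 : A 0 0 ≠ 0 := by rwa [a01, add_zero] at hA0s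
    have a02 : A 0 2 = 0 := by
      have h' := (mul_eq_zero.mp f3_00).resolve_right hB00
      rwa [a01, zero_add] at h'
    have a20 : A 2 0 = 0 := by rw [hermA 2 0, a02, star_zero]
    have a21 : A 2 1 = 0 := by
      have h' := (mul_eq_zero.mp f2_22).resolve_right hB22
      rwa [a20, zero_add] at h'
    have a12 : A 1 2 = 0 := by rw [hermA 1 2, a21, star_zero]
    have a11 : A 1 1 = A 0 0 := by
      have h' := mul_right_cancel₀ hB22 (f2_12.trans f2_02.symm)
      rwa [a10, zero_add, a01, add_zero] at h'
    have a22 : A 2 2 = A 0 0 := by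
      have h' := mul_right_cancel₀ hB00 (f3_20.trans f3_10.symm)
      rwa [a21, zero_add, a12, add_zero, a11] at h'
    have hA22 : A 2 2 ≠ 0 := by rw [a22]; exact hA00
    have b11 : B 1 1 = B 0 0 := by
      have h' := mul_left_cancel₀ hA00 (f1_01.trans f1_00.symm)
      rwa [b10, zero_add, b01, add_zero] at h'
    have b22 : B 2 2 = B 0 0 := by
      have h' := mul_left_cancel₀ hA22 (f4_22.trans f4_21.symm)
      rwa [b21, zero_add, b12, add_zero, b11] at h'
    exact main (A 0 0) (B 0 0)
      (by rw [Matrix.eta_fin_three A, a01, a02, a10, a20, a12, a21, a11, a22, Matrix.one_fin_three]; simp)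
      (by rw [Matrix.eta_fin_three B, b01, b02, b10, b20, b12, b21, b11, b22, Matrix.one_fin_three]; simp)
      hA00 hB00
  · -- c 1 > 0 and c 3 > 0
    have hc2 : (c 1 : ℂ) ≠ 0 := Complex.ofReal_ne_zero.mpr (ne_of_gt h.1)
    have hc4 : (c 3 : ℂ) ≠ 0 := Complex.ofReal_ne_zero.mpr (ne_of_gt h.2)
    have hB22 : B 2 2 ≠ 0 := right_ne_zero_of_mul (ne_of_eq_of_ne f2_02 hc2)
    have hA0s : A 0 0 + A 0 1 ≠ 0 := left_ne_zero_of_mul (ne_of_eq_of_ne f2_02 hc2)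
    have b02 : B 0 2 = 0 := (mul_eq_zero.mp f2_00).resolve_left hA0s
    have b12 : B 1 2 = 0 := (mul_eq_zero.mp f2_01).resolve_left hA0s
    have b20 : B 2 0 = 0 := by rw [hermB 2 0, b02, star_zero]
    have b21 : B 2 1 = 0 := by rw [hermB 2 1, b12, star_zero]
    have hA22 : A 2 2 ≠ 0 := left_ne_zero_of_mul (ne_of_eq_of_ne f4_21 hc4)
    have hBs : B 1 1 + B 1 2 ≠ 0 := right_ne_zero_of_mul (ne_of_eq_of_ne f4_21 hc4)
    have a12 : A 1 2 = 0 := (mul_eq_zero.mp f4_11).resolve_right hBs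
    have a02 : A 0 2 = 0 := (mul_eq_zero.mp f4_01).resolve_right hBs
    have a21 : A 2 1 = 0 := by rw [hermA 2 1, a12, star_zero]
    have a20 : A 2 0 = 0 := by rw [hermA 2 0, a02, star_zero]
    have b11 : B 1 1 = B 2 2 := by
      have h' := mul_left_cancel₀ hA22 (f4_21.trans f4_22.symm)
      rwa [b12, add_zero, b21, zero_add] at h'
    have b01 : B 0 1 = 0 := by
      have h' := (mul_eq_zero.mp f4_20).resolve_left hA22
      rwa [b02, add_zero] at h'
    have b10 : B 1 0 = 0 := by rw [hermB 1 0, b01, star_zero]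
    have hB11 : B 1 0 + B 1 1 ≠ 0 := by rw [b10, zero_add, b11]; exact hB22
    have a10 : A 1 0 = 0 := (mul_eq_zero.mp f1_11).resolve_right hB11
    have a01 : A 0 1 = 0 := by rw [hermA 0 1, a10, star_zero]
    have hA00 : A 0 0 ≠ 0 := by rwa [a01, add_zero] at hA0s
    have b00 : B 0 0 = B 2 2 := by
      have h' := mul_left_cancel₀ hA00 (f1_00.trans f1_01.symm)
      rw [b01, add_zero, b10, zero_add] at h'
      exact h'.trans b11
    have hB00 : B 0 0 ≠ 0 := by rw [b00]; exact hB22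
    have a11 : A 1 1 = A 0 0 := by
      have h' := mul_right_cancel₀ hB22 (f2_12.trans f2_02.symm)
      rwa [a10, zero_add, a01, add_zero] at h'
    have a22 : A 2 2 = A 0 0 := by
      have h' := mul_right_cancel₀ hB00 (f3_20.trans f3_10.symm)
      rwa [a21, zero_add, a12, add_zero, a11] at h'
    have b11' : B 1 1 = B 0 0 := b11.trans b00.symm
    have b22' : B 2 2 = B 0 0 := b00.symm
    exact main (A 0 0) (B 0 0)
      (by rw [Matrix.eta_fin_three A, a01, a02, a10, a20, a12, a21, a11, a22, Matrix.one_fin_three]; simp)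
      (by rw [Matrix.eta_fin_three B, b01, b02, b10, b20, b12, b21, b11', b22', Matrix.one_fin_three]; simp)
      hA00 hB00
  · -- c 2 > 0 and c 3 > 0
    have hc3 : (c 2 : ℂ) ≠ 0 := Complex.ofReal_ne_zero.mpr (ne_of_gt h.1)
    have hc4 : (c 3 : ℂ) ≠ 0 := Complex.ofReal_ne_zero.mpr (ne_of_gt h.2)
    have hA1s : A 1 1 + A 1 2 ≠ 0 := left_ne_zero_of_mul (ne_of_eq_of_ne f3_10 hc3)
    have hB00 : B 0 0 ≠ 0 := right_ne_zero_of_mul (ne_of_eq_of_ne f3_10 hc3)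
    have b10 : B 1 0 = 0 := (mul_eq_zero.mp f3_11).resolve_left hA1s
    have b20 : B 2 0 = 0 := (mul_eq_zero.mp f3_12).resolve_left hA1s
    have b01 : B 0 1 = 0 := by rw [hermB 0 1, b10, star_zero]
    have b02 : B 0 2 = 0 := by rw [hermB 0 2, b20, star_zero]
    have hA22 : A 2 2 ≠ 0 := left_ne_zero_of_mul (ne_of_eq_of_ne f4_21 hc4)
    have hBs : B 1 1 + B 1 2 ≠ 0 := right_ne_zero_of_mul (ne_of_eq_of_ne f4_21 hc4)
    have a12 : A 1 2 = 0 := (mul_eq_zero.mp f4_11).resolve_right hBs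
    have a02 : A 0 2 = 0 := (mul_eq_zero.mp f4_01).resolve_right hBs
    have a21 : A 2 1 = 0 := by rw [hermA 2 1, a12, star_zero]
    have a20 : A 2 0 = 0 := by rw [hermA 2 0, a02, star_zero]
    have a01 : A 0 1 = 0 := by
      have h' := (mul_eq_zero.mp f3_00).resolve_right hB00
      rwa [a02, add_zero] at h'
    have a10 : A 1 0 = 0 := by rw [hermA 1 0, a01, star_zero]
    have hA11 : A 1 1 ≠ 0 := by rwa [a12, add_zero] at hA1s
    have hA1s' : A 1 0 + A 1 1 ≠ 0 := by rw [a10, zero_add]; exact hA11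
    have b12 : B 1 2 = 0 := (mul_eq_zero.mp f2_11).resolve_left hA1s'
    have b21 : B 2 1 = 0 := by rw [hermB 2 1, b12, star_zero]
    have b11 : B 1 1 = B 2 2 := by
      have h' := mul_left_cancel₀ hA22 (f4_21.trans f4_22.symm)
      rwa [b12, add_zero, b21, zero_add] at h'
    have a22 : A 2 2 = A 1 1 := by
      have h' := mul_right_cancel₀ hB00 (f3_20.trans f3_10.symm)
      rwa [a21, zero_add, a12, add_zero] at h'
    have hB22 : B 2 2 ≠ 0 := by
      have h' : A 2 2 * B 2 2 = (c 3 : ℂ) := by rwa [b21, zero_add] at f4_22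
      exact right_ne_zero_of_mul (ne_of_eq_of_ne h' hc4)
    have a00 : A 0 0 = A 1 1 := by
      have h' := mul_right_cancel₀ hB22 (f2_02.trans f2_12.symm)
      rwa [a01, add_zero, a10, zero_add] at h'
    have hA00 : A 0 0 ≠ 0 := by rw [a00]; exact hA11
    have b00 : B 0 0 = B 1 1 := by
      have h' := mul_left_cancel₀ hA00 (f1_00.trans f1_01.symm)
      rwa [b01, add_zero, b10, zero_add] at h'
    have a11' : A 1 1 = A 0 0 := a00.symm
    have a22' : A 2 2 = A 0 0 := a22.trans a00.symm
    have b11' : B 1 1 = B 0 0 := b00.symm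
    have b22' : B 2 2 = B 0 0 := b11.symm.trans b00.symm
    exact main (A 0 0) (B 0 0)
      (by rw [Matrix.eta_fin_three A, a01, a02, a10, a20, a12, a21, a11', a22', Matrix.one_fin_three]; simp)
      (by rw [Matrix.eta_fin_three B, b01, b02, b10, b20, b12, b21, b11', b22', Matrix.one_fin_three]; simp)
      hA00 hB00
end

section
/- Let M₁ and M₂ be linearly independent complex d_A × d_B matrices, and suppose the two-dimensional subspace span{M₁, M₂} contains three matrices N₁, N₂, N₃, pairwise linearly independent (no one a scalar multiple of another), each nonzero and of rank at most 1. Then every matrix in span{M₁, M₂} has rank at most 1. (Equivalently: a two-dimensional subspace of a bipartite space that is not a tensor product space contains at most two product states up to scalar multiples.) -/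
open Matrix

/-- Rank ≤ 1 implies all 2×2 minors vanish. -/
lemma minor_of_rank_le_one {dA dB : ℕ} (M : Matrix (Fin dA) (Fin dB) ℂ)
    (h : M.rank ≤ 1) : ∀ i k j l, M i j * M k l = M i l * M k j := by
  intro i k j l
  set S := LinearMap.range M.mulVecLin with hS
  have hfr : Module.finrank ℂ S ≤ 1 := h
  obtain ⟨v₀, hv₀⟩ := finrank_le_one_iff.mp hfr
  have hu : (M *ᵥ Pi.single j 1) ∈ S := ⟨Pi.single j 1, rfl⟩
  have hv : (M *ᵥ Pi.single l 1) ∈ S := ⟨Pi.single l 1, rfl⟩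
  obtain ⟨a, ha⟩ := hv₀ ⟨_, hu⟩
  obtain ⟨b, hb⟩ := hv₀ ⟨_, hv⟩
  have ha' : a • (v₀ : Fin dA → ℂ) = M *ᵥ Pi.single j 1 := congrArg Subtype.val ha
  have hb' : b • (v₀ : Fin dA → ℂ) = M *ᵥ Pi.single l 1 := congrArg Subtype.val hb
  have hj : ∀ i', M i' j = a * (v₀ : Fin dA → ℂ) i' := by
    intro i'
    have := congrFun ha' i'
    simpa [Matrix.mulVec_single] using this.symm
  have hl : ∀ i', M i' l = b * (v₀ : Fin dA → ℂ) i' := by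
    intro i'
    have := congrFun hb' i'
    simpa [Matrix.mulVec_single] using this.symm
  rw [hj i, hj k, hl i, hl k]
  ring

/-- If all 2×2 minors vanish then rank ≤ 1. -/
lemma rank_le_one_of_minor {dA dB : ℕ} (M : Matrix (Fin dA) (Fin dB) ℂ)
    (h : ∀ i k j l, M i j * M k l = M i l * M k j) : M.rank ≤ 1 := by
  by_cases hM : M = 0
  · simp [hM]
  · obtain ⟨i₀, j₀, h₀⟩ : ∃ i j, M i j ≠ 0 := by
      by_contra hc
      push_neg at hc
      exact hM (by ext i j; simpa using hc i j)
    have hM' : M = vecMulVec (fun i => M i j₀ * (M i₀ j₀)⁻¹) (fun j => M i₀ j) := by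
      ext i j
      rw [vecMulVec_apply]
      field_simp
      linear_combination h i i₀ j j₀
    rw [hM', vecMulVec_eq Unit]
    calc (replicateCol Unit (fun i => M i j₀ * (M i₀ j₀)⁻¹) * replicateRow Unit (fun j => M i₀ j)).rank
        ≤ (replicateCol Unit (fun i => M i j₀ * (M i₀ j₀)⁻¹)).rank := Matrix.rank_mul_le_left _ _
      _ ≤ Fintype.card Unit := Matrix.rank_le_card_width _
      _ = 1 := rfl

lemma range_pair {α : Type*} (a b : α) : Set.range ![a, b] = {a, b} := by
  ext x
  simp [Fin.exists_fin_two]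
  tauto

theorem stmt_17 (dA dB : ℕ) (hdA : 1 ≤ dA) (hdB : 1 ≤ dB)
    (M₁ M₂ : Matrix (Fin dA) (Fin dB) ℂ)
    (hli : LinearIndependent ℂ ![M₁, M₂])
    (N₁ N₂ N₃ : Matrix (Fin dA) (Fin dB) ℂ)
    (hs1 : N₁ ∈ Submodule.span ℂ ({M₁, M₂} : Set (Matrix (Fin dA) (Fin dB) ℂ)))
    (hs2 : N₂ ∈ Submodule.span ℂ ({M₁, M₂} : Set (Matrix (Fin dA) (Fin dB) ℂ)))
    (hs3 : N₃ ∈ Submodule.span ℂ ({M₁, M₂} : Set (Matrix (Fin dA) (Fin dB) ℂ)))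
    (hn1 : N₁ ≠ 0) (hn2 : N₂ ≠ 0) (hn3 : N₃ ≠ 0)
    (hr1 : N₁.rank ≤ 1) (hr2 : N₂.rank ≤ 1) (hr3 : N₃.rank ≤ 1)
    (h12 : ∀ c : ℂ, N₁ ≠ c • N₂) (h13 : ∀ c : ℂ, N₁ ≠ c • N₃)
    (h23 : ∀ c : ℂ, N₂ ≠ c • N₃) :
    ∀ N ∈ Submodule.span ℂ ({M₁, M₂} : Set (Matrix (Fin dA) (Fin dB) ℂ)), N.rank ≤ 1 := by
  -- N₁, N₂ are linearly independent
  have hliN : LinearIndependent ℂ ![N₁, N₂] := by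
    rw [LinearIndependent.pair_iff]
    intro s t hst
    by_cases hs : s = 0
    · subst hs
      simp only [zero_smul, zero_add] at hst
      rcases smul_eq_zero.mp hst with ht | ht
      · exact ⟨rfl, ht⟩
      · exact absurd ht hn2
    · exfalso
      apply h12 (-t/s)
      have : s • N₁ = (-t) • N₂ := by
        rw [neg_smul, eq_neg_iff_add_eq_zero, add_comm] at *
        linear_combination (norm := module) hst
      calc N₁ = s⁻¹ • (s • N₁) := by rw [smul_smul, inv_mul_cancel₀ hs, one_smul]
        _ = s⁻¹ • ((-t) • N₂) := by rw [this]
        _ = (-t/s) • N₂ := by rw [smul_smul]; ring_nf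
  -- spans are equal
  have hspan : Submodule.span ℂ ({N₁, N₂} : Set (Matrix (Fin dA) (Fin dB) ℂ))
      = Submodule.span ℂ ({M₁, M₂} : Set (Matrix (Fin dA) (Fin dB) ℂ)) := by
    apply Submodule.eq_of_le_of_finrank_eq
    · rw [Submodule.span_le]
      rintro x (rfl | rfl)
      · exact hs1
      · simpa using hs2
    · have e1 : Module.finrank ℂ (Submodule.span ℂ ({N₁, N₂} : Set (Matrix (Fin dA) (Fin dB) ℂ))) = 2 := by
        rw [← range_pair N₁ N₂, finrank_span_eq_card hliN]
        simp
      have e2 : Module.finrank ℂ (Submodule.span ℂ ({M₁, M₂} : Set (Matrix (Fin dA) (Fin dB) ℂ))) = 2 := by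
        rw [← range_pair M₁ M₂, finrank_span_eq_card hli]
        simp
      rw [e1, e2]
  -- N₃ = a • N₁ + b • N₂ with a, b ≠ 0
  have hs3' : N₃ ∈ Submodule.span ℂ ({N₁, N₂} : Set (Matrix (Fin dA) (Fin dB) ℂ)) := by
    rw [hspan]; exact hs3
  obtain ⟨a, b, hab⟩ := Submodule.mem_span_pair.mp hs3'
  have ha : a ≠ 0 := by
    rintro rfl
    simp only [zero_smul, zero_add] at hab
    have hb0 : b ≠ 0 := by rintro rfl; simp at hab; exact hn3 hab.symm
    apply h23 b⁻¹
    rw [← hab, smul_smul, inv_mul_cancel₀ hb0, one_smul]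
  have hb : b ≠ 0 := by
    rintro rfl
    simp only [zero_smul, add_zero] at hab
    have ha0 : a ≠ 0 := by rintro rfl; simp at hab; exact hn3 hab.symm
    apply h13 a⁻¹
    rw [← hab, smul_smul, inv_mul_cancel₀ ha0, one_smul]
  -- minors
  have m1 := minor_of_rank_le_one N₁ hr1
  have m2 := minor_of_rank_le_one N₂ hr2
  have m3 := minor_of_rank_le_one N₃ hr3
  -- mixed minor vanishes
  have mixed : ∀ i k j l, N₁ i j * N₂ k l + N₂ i j * N₁ k l
      = N₁ i l * N₂ k j + N₂ i l * N₁ k j := by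
    intro i k j l
    have h3 := m3 i k j l
    rw [← hab] at h3
    simp only [Matrix.add_apply, Matrix.smul_apply, smul_eq_mul] at h3
    have key : a * b * (N₁ i j * N₂ k l + N₂ i j * N₁ k l)
        = a * b * (N₁ i l * N₂ k j + N₂ i l * N₁ k j) := by
      have e1 := m1 i k j l
      have e2 := m2 i k j l
      linear_combination h3 - a^2 * e1 - b^2 * e2
    exact mul_left_cancel₀ (mul_ne_zero ha hb) key
  -- conclude
  intro N hN
  have hN' : N ∈ Submodule.span ℂ ({N₁, N₂} : Set (Matrix (Fin dA) (Fin dB) ℂ)) := by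
    rw [hspan]; exact hN
  obtain ⟨x, y, hxy⟩ := Submodule.mem_span_pair.mp hN'
  apply rank_le_one_of_minor
  intro i k j l
  rw [← hxy]
  simp only [Matrix.add_apply, Matrix.smul_apply, smul_eq_mul]
  have e1 := m1 i k j l
  have e2 := m2 i k j l
  have e3 := mixed i k j l
  linear_combination x^2 * e1 + y^2 * e2 + x*y*e3
end
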